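/- Let Y be a mean zero random variable with variance σ² ∈ (0,∞), and let Y* be defined on the same probability space and have the Y-zero biased distribution. Suppose Y* − Y ≤ c almost surely for some constant c > 0. Fix t > e and set θ = (log t − log log t)/c; if E[exp(θY)] is finite, then P(Y ≥ t) ≤ exp(−(t/c)(log t − log log t − σ²/c)). -/

import Mathlib

open MeasureTheory ProbabilityTheory Real

/-- `Ystar` has the `Y`-zero biased distribution with respect to variance `σ2`:
`E[Y f(Y)] = σ2 * E[f'(Ystar)]` for every (absolutely continuous) differentiable
function `f` with derivative `f'` for which both expectations exist. -/
def ZeroBiased {Ω : Type*} [MeasurableSpace Ω] (μ : Measure Ω)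
    (Y Ystar : Ω → ℝ) (σ2 : ℝ) : Prop :=
  ∀ f f' : ℝ → ℝ, (∀ x, HasDerivAt f (f' x) x) →
    Integrable (fun ω => Y ω * f (Y ω)) μ →
    Integrable (fun ω => f' (Ystar ω)) μ →
    ∫ ω, Y ω * f (Y ω) ∂μ = σ2 * ∫ ω, f' (Ystar ω) ∂μ

/-!
The zero bias identity applied to `f = exp (s ·)` gives `m' s = σ2 s E[exp (s Y*)]` for the
moment generating function `m` of `Y`, and `Y* ≤ Y + c` turns this into the differential
inequality `m' s ≤ σ2 s exp (s c) m s`. Integrating it from `0` gives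
`log m θ ≤ σ2 ∫₀^θ s exp (s c) ds = σ2 ((θ c - 1) exp (θ c) + 1) / c²`, and Chernoff's bound at
`θ = (log t - log log t) / c`, where `exp (θ c) = t / log t`, yields the claim.
-/

open Set

theorem le_mul_exp_sub_of_hasDerivAt_le_mul {f f' F F' : ℝ → ℝ} {a b : ℝ} (hab : a ≤ b)
    (hf : ContinuousOn f (Icc a b)) (hf' : ∀ x ∈ Ioo a b, HasDerivAt f (f' x) x)
    (hF : ContinuousOn F (Icc a b)) (hF' : ∀ x ∈ Ioo a b, HasDerivAt F (F' x) x)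
    (hle : ∀ x ∈ Ioo a b, f' x ≤ F' x * f x) :
    f b ≤ f a * exp (F b - F a) := by
  have hanti : AntitoneOn (fun x => f x * exp (-F x)) (Icc a b) := by
    refine antitoneOn_of_hasDerivWithinAt_nonpos (convex_Icc a b) (hf.mul hF.neg.rexp)
      (f' := fun x => f' x * exp (-F x) + f x * (exp (-F x) * -F' x)) ?_ ?_ <;>
      rw [interior_Icc] <;> intro x hx
    · exact ((hf' x hx).mul (hF' x hx).neg.exp).hasDerivWithinAt
    · nlinarith [mul_nonneg (sub_nonneg.2 (hle x hx)) (exp_pos (-F x)).le]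
  calc f b = f b * exp (-F b) * exp (F b) := by rw [mul_assoc, ← exp_add]; simp
    _ ≤ f a * exp (-F a) * exp (F b) :=
      mul_le_mul_of_nonneg_right (hanti (left_mem_Icc.2 hab) (right_mem_Icc.2 hab) hab)
        (exp_pos _).le
    _ = f a * exp (F b - F a) := by rw [mul_assoc, ← exp_add, neg_add_eq_sub]

theorem exp_mul_le_exp_mul_add_exp_mul {a b t : ℝ} (x : ℝ) (hat : a ≤ t) (htb : t ≤ b) :
    exp (t * x) ≤ exp (a * x) + exp (b * x) := by
  rcases le_total 0 x with hx | hx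
  · have := exp_le_exp.2 (mul_le_mul_of_nonneg_right htb hx)
    linarith [exp_pos (a * x)]
  · have := exp_le_exp.2 (mul_le_mul_of_nonpos_right hat hx)
    linarith [exp_pos (b * x)]

theorem sub_one_mul_exp_add_one_le {t : ℝ} (ht : exp 1 ≤ t) :
    (log t - log (log t) - 1) * exp (log t - log (log t)) + 1 ≤ t := by
  have hlog : 1 ≤ log t := by simpa using log_le_log (exp_pos 1) ht
  have ht0 : 0 < t := (exp_pos 1).trans_le ht
  have hlog0 : 0 < log t := one_pos.trans_le hlog
  have hratio : 1 ≤ t / log t := by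
    rw [le_div_iff₀ hlog0]
    linarith [log_le_sub_one_of_pos ht0]
  have hloglog : 0 ≤ log (log t) := log_nonneg hlog
  rw [exp_sub, exp_log ht0, exp_log hlog0]
  have hsplit : (log t - log (log t) - 1) * (t / log t) + 1
      = t - ((log (log t) + 1) * (t / log t) - 1) := by
    field_simp
    ring
  have hone : 1 ≤ (log (log t) + 1) * (t / log t) :=
    one_le_mul_of_one_le_of_one_le (by linarith) hratio
  linarith

namespace ProbabilityTheory

variable {Ω : Type*} [MeasurableSpace Ω] {μ : Measure Ω}

theorem continuousOn_mgf_Icc {X : Ω → ℝ} {a b : ℝ}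
    (ha : Integrable (fun ω => exp (a * X ω)) μ) (hb : Integrable (fun ω => exp (b * X ω)) μ) :
    ContinuousOn (mgf X μ) (Icc a b) :=
  continuousOn_of_dominated (fun t ht => (integrable_exp_mul_of_le_of_le ha hb ht.1 ht.2).1)
    (fun _ ht => ae_of_all _ fun ω => by
      rw [norm_eq_abs, abs_exp]
      exact exp_mul_le_exp_mul_add_exp_mul (X ω) ht.1 ht.2)
    (ha.add hb) (ae_of_all _ fun _ => by fun_prop)

theorem Ioo_subset_interior_integrableExpSet {X : Ω → ℝ} {a b : ℝ}
    (ha : Integrable (fun ω => exp (a * X ω)) μ) (hb : Integrable (fun ω => exp (b * X ω)) μ) :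
    Ioo a b ⊆ interior (integrableExpSet X μ) :=
  interior_Icc (a := a) (b := b) ▸
    interior_mono fun _ ht => integrable_exp_mul_of_le_of_le ha hb ht.1 ht.2

end ProbabilityTheory

namespace ZeroBiased

variable {Ω : Type*} [MeasurableSpace Ω] {μ : Measure Ω} {Y Ystar : Ω → ℝ} {σ2 c : ℝ}

theorem integral_mul_exp_le (hzb : ZeroBiased μ Y Ystar σ2) (hσ2 : 0 ≤ σ2)
    (hYstar : AEMeasurable Ystar μ) (hbdd : ∀ᵐ ω ∂μ, Ystar ω - Y ω ≤ c) {s : ℝ} (hs : 0 ≤ s)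
    (hexp : Integrable (fun ω => exp (s * Y ω)) μ)
    (hmul : Integrable (fun ω => Y ω * exp (s * Y ω)) μ) :
    ∫ ω, Y ω * exp (s * Y ω) ∂μ ≤ σ2 * s * exp (s * c) * mgf Y μ s := by
  have hstar_le : ∀ᵐ ω ∂μ, exp (s * Ystar ω) ≤ exp (s * c) * exp (s * Y ω) :=
    hbdd.mono fun ω hω => by
      rw [← exp_add, ← mul_add]
      exact exp_le_exp.2 (mul_le_mul_of_nonneg_left (by linarith) hs)
  have hstar : Integrable (fun ω => exp (s * Ystar ω)) μ :=
    (hexp.const_mul _).mono' (hYstar.const_mul s).exp.aestronglyMeasurable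
      (hstar_le.mono fun ω h => by rwa [norm_eq_abs, abs_exp])
  have hderiv (x : ℝ) : HasDerivAt (fun y => exp (s * y)) (s * exp (s * x)) x := by
    simpa [mul_comm] using ((hasDerivAt_id x).const_mul s).exp
  calc ∫ ω, Y ω * exp (s * Y ω) ∂μ = σ2 * s * ∫ ω, exp (s * Ystar ω) ∂μ := by
        rw [hzb _ _ hderiv hmul (hstar.const_mul s), integral_const_mul, mul_assoc]
    _ ≤ σ2 * s * ∫ ω, exp (s * c) * exp (s * Y ω) ∂μ :=
        mul_le_mul_of_nonneg_left (integral_mono_ae hstar (hexp.const_mul _) hstar_le)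
          (mul_nonneg hσ2 hs)
    _ = σ2 * s * exp (s * c) * mgf Y μ s := by rw [integral_const_mul, mgf]; ring

theorem mgf_le [IsProbabilityMeasure μ] (hzb : ZeroBiased μ Y Ystar σ2) (hσ2 : 0 ≤ σ2)
    (hYstar : AEMeasurable Ystar μ) (hc : c ≠ 0) (hbdd : ∀ᵐ ω ∂μ, Ystar ω - Y ω ≤ c)
    {θ : ℝ} (hθ : 0 ≤ θ) (hint : Integrable (fun ω => exp (θ * Y ω)) μ) :
    mgf Y μ θ ≤ exp (σ2 * (((θ * c - 1) * exp (θ * c) + 1) / c ^ 2)) := by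
  have hint0 : Integrable (fun ω => exp (0 * Y ω)) μ := by simp
  have hinterior := Ioo_subset_interior_integrableExpSet hint0 hint
  set F : ℝ → ℝ := fun s => σ2 * (((s * c - 1) * exp (s * c) + 1) / c ^ 2)
  have hF (s : ℝ) : HasDerivAt F (σ2 * s * exp (s * c)) s := by
    have hsc : HasDerivAt (fun s => s * c) c s := hasDerivAt_mul_const c
    refine ((((hsc.sub_const 1).mul hsc.exp).add_const 1).div_const (c ^ 2)).const_mul σ2
      |>.congr_deriv ?_
    field_simp
    ring
  have h := le_mul_exp_sub_of_hasDerivAt_le_mul hθ (continuousOn_mgf_Icc hint0 hint)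
    (fun s hs => hasDerivAt_mgf (hinterior hs))
    (fun s _ => (hF s).continuousAt.continuousWithinAt) (fun s _ => hF s)
    (fun s hs => hzb.integral_mul_exp_le hσ2 hYstar hbdd hs.1.le
      (integrable_of_mem_integrableExpSet (interior_subset (hinterior hs)))
      (by simpa using integrable_pow_mul_exp_of_mem_interior_integrableExpSet (hinterior hs) 1))
  simpa [F, mgf_zero] using h

end ZeroBiased

theorem zero_bias_right_tail_tlogt_general
    {Ω : Type*} [MeasurableSpace Ω] (μ : Measure Ω) [IsProbabilityMeasure μ]
    (Y Ystar : Ω → ℝ) (hYstar : Measurable Ystar)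
    (σ2 : ℝ) (hσ2 : 0 < σ2)
    (hzb : ZeroBiased μ Y Ystar σ2)
    (c : ℝ) (hc : 0 < c)
    (hbdd : ∀ᵐ ω ∂μ, Ystar ω - Y ω ≤ c)
    (t : ℝ) (ht : Real.exp 1 < t)
    (hmgf : Integrable (fun ω => exp ((Real.log t - Real.log (Real.log t)) / c * Y ω)) μ) :
    (μ {ω | t ≤ Y ω}).toReal ≤
      exp (-(t / c) * (Real.log t - Real.log (Real.log t) - σ2 / c)) := by
  set θ := (log t - log (log t)) / c
  have hlog : 0 ≤ log t := log_nonneg ((one_le_exp zero_le_one).trans ht.le)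
  have hθ : 0 ≤ θ := div_nonneg (sub_nonneg.2 (log_le_self hlog)) hc.le
  have hθc : θ * c = log t - log (log t) := div_mul_cancel₀ _ hc.ne'
  have hmgf_le := hzb.mgf_le hσ2.le hYstar.aemeasurable hc.ne' hbdd hθ hmgf
  rw [hθc] at hmgf_le
  calc (μ {ω | t ≤ Y ω}).toReal ≤ exp (-θ * t) * mgf Y μ θ := measure_ge_le_exp_mul_mgf t hθ hmgf
    _ ≤ exp (-θ * t) * exp (σ2 * (t / c ^ 2)) := by
        gcongr
        refine hmgf_le.trans (exp_le_exp.2 ?_)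
        gcongr
        exact sub_one_mul_exp_add_one_le ht.le
    _ = exp (-(t / c) * (log t - log (log t) - σ2 / c)) := by
        rw [← exp_add]
        congr 1
        field_simp
        linear_combination (-(t * c)) * hθc

theorem zero_bias_right_tail_tlogt
    {Ω : Type*} [MeasurableSpace Ω] (μ : Measure Ω) [IsProbabilityMeasure μ]
    (Y Ystar : Ω → ℝ) (hY : Measurable Y) (hYstar : Measurable Ystar)
    (σ2 : ℝ) (hσ2 : 0 < σ2)
    (hmean : ∫ ω, Y ω ∂μ = 0) (hL2 : MemLp Y 2 μ) (hvar : variance Y μ = σ2)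
    (hzb : ZeroBiased μ Y Ystar σ2)
    (c : ℝ) (hc : 0 < c)
    (hbdd : ∀ᵐ ω ∂μ, Ystar ω - Y ω ≤ c)
    (t : ℝ) (ht : Real.exp 1 < t)
    (hmgf : Integrable (fun ω => exp ((Real.log t - Real.log (Real.log t)) / c * Y ω)) μ) :
    (μ {ω | t ≤ Y ω}).toReal ≤
      exp (-(t / c) * (Real.log t - Real.log (Real.log t) - σ2 / c)) :=
  zero_bias_right_tail_tlogt_general μ Y Ystar hYstar σ2 hσ2 hzb c hc hbdd t ht hmgf
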